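/- arXiv:2504.19725 — 2 statements merged into one kernel-verified Lean document; each statement's English description precedes it below -/
import Mathlib

section
/- Let f, g : [0,1] → ℝ be right-continuous functions of bounded variation with f(0) = g(0), f(1) = g(1) and g(u) ≥ f(u) for all u ∈ [0,1], and let h : [0,1] → ℝ be nondecreasing. If ∫₀¹ h(u) df(u) < ∞ or ∫₀¹ h(u) dg(u) > −∞, then ∫₀¹ h(u) dg(u) ≤ ∫₀¹ h(u) df(u), where the integrals are Lebesgue–Stieltjes integrals with respect to the signed measures induced by g and f. -/
/-!
Write `G = g₁ + f₂` and `F = f₁ + g₂`. Then `f ≤ g` says `F ≤ G` on `[0,1]`, with equality at both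
endpoints, so `dG` puts no more mass than `dF` on every final segment `(s,1]` or `[s,1]` of `(0,1]`,
and both have the same total mass. The superlevel sets of the nondecreasing `h` are such final
segments, so by the layer cake formula `∫ h dG ≤ ∫ h dF`, which is the claim after cancelling.
-/

open MeasureTheory Set Filter Function

section Dominance

variable {α : Type*} [MeasurableSpace α] {μ ν : Measure α}

theorem lintegral_ofReal_le_of_measure_lt_le {f : α → ℝ} (hμ : 0 ≤ᵐ[μ] f) (hν : 0 ≤ᵐ[ν] f)
    (hfμ : AEMeasurable f μ) (hfν : AEMeasurable f ν)
    (hlevel : ∀ t, μ {x | t < f x} ≤ ν {x | t < f x}) :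
    ∫⁻ x, ENNReal.ofReal (f x) ∂μ ≤ ∫⁻ x, ENNReal.ofReal (f x) ∂ν := by
  rw [lintegral_eq_lintegral_meas_lt μ hμ hfμ, lintegral_eq_lintegral_meas_lt ν hν hfν]
  exact lintegral_mono fun t ↦ hlevel t

theorem integral_le_integral_of_measure_lt_le [IsFiniteMeasure μ] [IsFiniteMeasure ν]
    {f : α → ℝ} (hfμ : Integrable f μ) (hfν : Integrable f ν) {c : ℝ}
    (hcμ : ∀ᵐ x ∂μ, c ≤ f x) (hcν : ∀ᵐ x ∂ν, c ≤ f x) (huniv : μ univ = ν univ)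
    (hlevel : ∀ t, μ {x | t < f x} ≤ ν {x | t < f x}) :
    ∫ x, f x ∂μ ≤ ∫ x, f x ∂ν := by
  have hshift : ∀ (ρ : Measure α) [IsFiniteMeasure ρ], Integrable f ρ →
      ∫ x, f x ∂ρ = ∫ x, (f x - c) ∂ρ + ρ.real univ * c := by
    intro ρ _ hf
    rw [integral_sub hf (integrable_const c), integral_const, smul_eq_mul]
    ring
  have hnn : ∀ ρ : Measure α, (∀ᵐ x ∂ρ, c ≤ f x) → 0 ≤ᵐ[ρ] fun x ↦ f x - c := fun ρ hc ↦ by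
    filter_upwards [hc] with x hx using sub_nonneg.2 hx
  have hlint : ∫⁻ x, ENNReal.ofReal (f x - c) ∂μ ≤ ∫⁻ x, ENNReal.ofReal (f x - c) ∂ν :=
    lintegral_ofReal_le_of_measure_lt_le (hnn μ hcμ) (hnn ν hcν)
      (hfμ.aemeasurable.sub_const c) (hfν.aemeasurable.sub_const c)
      fun t ↦ by simpa only [lt_sub_iff_add_lt] using hlevel (t + c)
  have hshifted : ∫ x, (f x - c) ∂μ ≤ ∫ x, (f x - c) ∂ν := by
    rw [integral_eq_lintegral_of_nonneg_ae (hnn μ hcμ) (hfμ.sub (integrable_const c)).1,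
      integral_eq_lintegral_of_nonneg_ae (hnn ν hcν) (hfν.sub (integrable_const c)).1]
    exact ENNReal.toReal_mono (hfν.sub (integrable_const c)).lintegral_lt_top.ne hlint
  rw [hshift μ hfμ, hshift ν hfν, measureReal_def, measureReal_def, huniv]
  linarith

end Dominance

theorem Real.eq_empty_or_Ioc_or_Icc_of_forall_Icc_subset {S : Set ℝ} {a b : ℝ}
    (hS : S ⊆ Ioc a b) (hup : ∀ u ∈ S, Icc u b ⊆ S) :
    S = ∅ ∨ (∃ s ∈ Icc a b, S = Ioc s b) ∨ ∃ s ∈ Ioc a b, S = Icc s b := by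
  rcases S.eq_empty_or_nonempty with hempty | ⟨x, hx⟩
  · exact .inl hempty
  have hbdd : BddBelow S := ⟨a, fun u hu ↦ (hS hu).1.le⟩
  have hsInf_le : sInf S ≤ b := (csInf_le hbdd hx).trans (hS hx).2
  by_cases hmem : sInf S ∈ S
  · refine .inr (.inr ⟨sInf S, hS hmem, ?_⟩)
    exact Subset.antisymm (fun u hu ↦ ⟨csInf_le hbdd hu, (hS hu).2⟩) (hup _ hmem)
  · refine .inr (.inl ⟨sInf S, ⟨le_csInf ⟨x, hx⟩ fun u hu ↦ (hS hu).1.le, hsInf_le⟩, ?_⟩)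
    apply Subset.antisymm
    · exact fun u hu ↦ ⟨(csInf_le hbdd hu).lt_of_ne (ne_of_mem_of_not_mem hu hmem).symm,
        (hS hu).2⟩
    · intro u hu
      obtain ⟨v, hv, hvu⟩ := exists_lt_of_csInf_lt ⟨x, hx⟩ hu.1
      exact hup v hv ⟨hvu.le, hu.2⟩

theorem MonotoneOn.integrableOn_Ioc {μ : Measure ℝ} [IsFiniteMeasureOnCompacts μ] {h : ℝ → ℝ}
    {a b : ℝ} (hmono : MonotoneOn h (Icc a b)) : IntegrableOn h (Ioc a b) μ :=
  (hmono.integrableOn_isCompact isCompact_Icc).mono_set Ioc_subset_Icc_self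

namespace StieltjesFunction

variable {F G : StieltjesFunction ℝ} {a b s : ℝ}

theorem leftLim_le_leftLim_of_le (has : a < s) (hle : ∀ u ∈ Ioo a s, F u ≤ G u) :
    leftLim F s ≤ leftLim G s :=
  le_of_tendsto_of_tendsto (F.mono.tendsto_leftLim s) (G.mono.tendsto_leftLim s)
    (eventually_of_mem (Ioo_mem_nhdsLT has) hle)

theorem measure_Ioc_le_of_le (hs : F s ≤ G s) (hb : F b = G b) :
    G.measure (Ioc s b) ≤ F.measure (Ioc s b) := by
  rw [measure_Ioc, measure_Ioc]
  exact ENNReal.ofReal_le_ofReal (by linarith)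

theorem measure_Icc_le_of_le (has : a < s) (hle : ∀ u ∈ Ioo a s, F u ≤ G u) (hb : F b = G b) :
    G.measure (Icc s b) ≤ F.measure (Icc s b) := by
  rw [measure_Icc, measure_Icc]
  exact ENNReal.ofReal_le_ofReal (by linarith [leftLim_le_leftLim_of_le has hle])

theorem measure_le_of_forall_Icc_subset (hle : ∀ u ∈ Icc a b, F u ≤ G u) (hb : F b = G b)
    {S : Set ℝ} (hS : S ⊆ Ioc a b) (hup : ∀ u ∈ S, Icc u b ⊆ S) :
    G.measure S ≤ F.measure S := by
  obtain rfl | ⟨s, hs, rfl⟩ | ⟨s, hs, rfl⟩ :=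
    Real.eq_empty_or_Ioc_or_Icc_of_forall_Icc_subset hS hup
  · simp
  · exact measure_Ioc_le_of_le (hle s hs) hb
  · exact measure_Icc_le_of_le hs.1 (fun u hu ↦ hle u ⟨hu.1.le, hu.2.le.trans hs.2⟩) hb

theorem setIntegral_Ioc_le_of_le {h : ℝ → ℝ} (hmono : MonotoneOn h (Icc a b))
    (hle : ∀ u ∈ Icc a b, F u ≤ G u) (ha : F a = G a) (hb : F b = G b) :
    ∫ u in Ioc a b, h u ∂G.measure ≤ ∫ u in Ioc a b, h u ∂F.measure := by
  have hfin (φ : StieltjesFunction ℝ) : IsFiniteMeasure (φ.measure.restrict (Ioc a b)) :=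
    isFiniteMeasure_restrict.2 (by simp [measure_Ioc])
  have hbelow (φ : StieltjesFunction ℝ) : ∀ᵐ u ∂φ.measure.restrict (Ioc a b), h a ≤ h u :=
    ae_restrict_of_forall_mem measurableSet_Ioc fun u hu ↦
      hmono (left_mem_Icc.2 (hu.1.le.trans hu.2)) (Ioc_subset_Icc_self hu) hu.1.le
  refine integral_le_integral_of_measure_lt_le hmono.integrableOn_Ioc hmono.integrableOn_Ioc
    (hbelow G) (hbelow F) ?_ ?_
  · rw [Measure.restrict_apply_univ, Measure.restrict_apply_univ, measure_Ioc, measure_Ioc, ha, hb]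
  · intro t
    rw [Measure.restrict_apply' measurableSet_Ioc, Measure.restrict_apply' measurableSet_Ioc]
    refine measure_le_of_forall_Icc_subset hle hb inter_subset_right fun u hu v hv ↦ ?_
    exact ⟨hu.1.trans_le (hmono (Ioc_subset_Icc_self hu.2) ⟨hu.2.1.le.trans hv.1, hv.2⟩ hv.1),
      hu.2.1.trans_le hv.1, hv.2⟩

theorem setIntegral_Ioc_add {h : ℝ → ℝ} (hmono : MonotoneOn h (Icc a b)) :
    ∫ u in Ioc a b, h u ∂(F + G).measure =
      (∫ u in Ioc a b, h u ∂F.measure) + ∫ u in Ioc a b, h u ∂G.measure := by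
  rw [measure_add, Measure.restrict_add,
    integral_add_measure hmono.integrableOn_Ioc hmono.integrableOn_Ioc]

end StieltjesFunction

/-- Lemma 2.3: if `f` and `g` are right-continuous functions of bounded variation on
`[0,1]` — encoded, via Jordan decomposition, as differences of right-continuous
nondecreasing functions (`StieltjesFunction`s) on `[0,1]` — with `f 0 = g 0`,
`f 1 = g 1` and `f ≤ g` on `[0,1]`, and `h` is nondecreasing on `[0,1]`, then
`∫₀¹ h dg ≤ ∫₀¹ h df`, the integrals being Lebesgue–Stieltjes integrals over `(0,1]`
with respect to the induced (finite) signed measures.  (The well-definedness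
side-condition of the paper is automatic here: `h` is bounded on `[0,1]` and all the
Stieltjes measures are finite on `(0,1]`, so every integral is a real number.) -/
theorem stmt_0 (f g h : ℝ → ℝ) (f₁ f₂ g₁ g₂ : StieltjesFunction ℝ)
    (hf : ∀ u ∈ Icc (0:ℝ) 1, f u = f₁ u - f₂ u)
    (hg : ∀ u ∈ Icc (0:ℝ) 1, g u = g₁ u - g₂ u)
    (h0 : f 0 = g 0) (h1 : f 1 = g 1)
    (hle : ∀ u ∈ Icc (0:ℝ) 1, f u ≤ g u)
    (hmono : MonotoneOn h (Icc (0:ℝ) 1)) :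
    (∫ u in Ioc (0:ℝ) 1, h u ∂g₁.measure) - (∫ u in Ioc (0:ℝ) 1, h u ∂g₂.measure)
      ≤ (∫ u in Ioc (0:ℝ) 1, h u ∂f₁.measure) -
          (∫ u in Ioc (0:ℝ) 1, h u ∂f₂.measure) := by
  have hFG : ∀ u ∈ Icc (0:ℝ) 1, (f₁ + g₂) u ≤ (g₁ + f₂) u := fun u hu ↦ by
    simp only [StieltjesFunction.add_apply]; linarith [hf u hu, hg u hu, hle u hu]
  have hFG₀ : (f₁ + g₂) 0 = (g₁ + f₂) 0 := by
    simp only [StieltjesFunction.add_apply]; linarith [hf 0 (by simp), hg 0 (by simp)]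
  have hFG₁ : (f₁ + g₂) 1 = (g₁ + f₂) 1 := by
    simp only [StieltjesFunction.add_apply]; linarith [hf 1 (by simp), hg 1 (by simp)]
  have key := StieltjesFunction.setIntegral_Ioc_le_of_le hmono hFG hFG₀ hFG₁
  rw [StieltjesFunction.setIntegral_Ioc_add hmono,
    StieltjesFunction.setIntegral_Ioc_add hmono] at key
  linarith
end

section
/- Let σ > 0 and α ∈ (0,1). For b ∈ [1/2,1), let X_b be the random variable whose quantile function is F^{-1}(u) = μ + σ(u−1+b)/√((2/3)(1−b)³) for u ∈ (0,1−b), F^{-1}(u) = μ for u ∈ [1−b,b], and F^{-1}(u) = μ + σ(u−b)/√((2/3)(1−b)³) for u ∈ (b,1). Each X_b is symmetric and unimodal with mean μ and variance σ², and sup over b ∈ [1/2, max(α,1−α)] of TVaR_α(X_b) equals μ + 2σ√α/(3(1−α)) if α ∈ (0,1/3), equals μ + √3·σ·α if α ∈ [1/3,2/3), and equals μ + 2σ/(3√(1−α)) if α ∈ [2/3,1). -/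
open MeasureTheory Set

noncomputable section

variable {Ω : Type*} [MeasureSpace Ω]

/-- The (right-continuous) cumulative distribution function of a random variable. -/
def cdfRV (X : Ω → ℝ) (t : ℝ) : ℝ := ((volume : Measure Ω) {ω | X ω ≤ t}).toReal

/-- The survival function `x ↦ P(X > x)` of a random variable. -/
def sfRV (X : Ω → ℝ) (t : ℝ) : ℝ := ((volume : Measure Ω) {ω | t < X ω}).toReal

/-- The left-continuous quantile function `F_X^{-1}(p) = inf {x | F_X x ≥ p}`. -/
def quantileRV (X : Ω → ℝ) (p : ℝ) : ℝ := sInf {x : ℝ | p ≤ cdfRV X x}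

/-- A random variable is unimodal if its cdf is convex on `(-∞, x₀)` and concave on
`(x₀, ∞)` for some mode `x₀`. -/
def Unimodal (X : Ω → ℝ) : Prop :=
  ∃ x₀ : ℝ, ConvexOn ℝ (Iio x₀) (cdfRV X) ∧ ConcaveOn ℝ (Ioi x₀) (cdfRV X)

/-- `X` is symmetric about `c`: `X - c` and `c - X` are equal in distribution. -/
def SymmAbout (X : Ω → ℝ) (c : ℝ) : Prop :=
  Measure.map (fun ω => X ω - c) (volume : Measure Ω) =
    Measure.map (fun ω => c - X ω) (volume : Measure Ω)

/-- `X` is symmetric (about some point). -/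
def SymmetricRV (X : Ω → ℝ) : Prop := ∃ c : ℝ, SymmAbout X c

/-- `V(μ, σ)`: random variables with mean `μ` and variance `σ²`. -/
def Vset (μ σ : ℝ) : Set (Ω → ℝ) :=
  {X | Measurable X ∧ Integrable X (volume : Measure Ω) ∧
    (∫ ω, X ω ∂(volume : Measure Ω)) = μ ∧
    Integrable (fun ω => (X ω - μ) ^ 2) (volume : Measure Ω) ∧
    (∫ ω, (X ω - μ) ^ 2 ∂(volume : Measure Ω)) = σ ^ 2}

/-- `V_U(μ, σ)`: unimodal members of `V(μ, σ)`. -/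
def VU (μ σ : ℝ) : Set (Ω → ℝ) := {X | X ∈ Vset μ σ ∧ Unimodal X}

/-- `V_S(μ, σ)`: members of `V(μ, σ)` symmetric about the mean `μ`. -/
def VS (μ σ : ℝ) : Set (Ω → ℝ) := {X | X ∈ Vset μ σ ∧ SymmAbout X μ}

/-- `V_{SU}(μ, σ)`: symmetric and unimodal members of `V(μ, σ)`. -/
def VSU (μ σ : ℝ) : Set (Ω → ℝ) := {X | X ∈ Vset μ σ ∧ SymmAbout X μ ∧ Unimodal X}

/-- The distortion riskmetric `ρ_g`. -/
def rho (g : ℝ → ℝ) (X : Ω → ℝ) : ℝ :=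
  (∫ x in Iio (0 : ℝ), (g (sfRV X x) - g 1)) + ∫ x in Ioi (0 : ℝ), g (sfRV X x)

/-- The entropy `∫ g(P(X > x)) dx`. -/
def entropyRV (g : ℝ → ℝ) (X : Ω → ℝ) : ℝ := ∫ x : ℝ, g (sfRV X x)

/-- The weighted entropy `∫ ψ(x) g(P(X > x)) dx`. -/
def wentropyRV (ψ g : ℝ → ℝ) (X : Ω → ℝ) : ℝ := ∫ x : ℝ, ψ x * g (sfRV X x)

/-- `g ∈ 𝒢`: `g` is of bounded variation on `[0,1]` with `g 0 = 0`. -/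
def memG (g : ℝ → ℝ) : Prop := BoundedVariationOn g (Icc 0 1) ∧ g 0 = 0

/-- `ĝ(u) = g(1) - g(1-u)`. -/
def hatg (g : ℝ → ℝ) : ℝ → ℝ := fun u => g 1 - g (1 - u)

/-- The convex envelope on `[0,1]`: the largest convex function below `k` on `[0,1]`. -/
def convexEnvelope (k : ℝ → ℝ) : ℝ → ℝ := fun x =>
  sSup {y : ℝ | ∃ h : ℝ → ℝ, ConvexOn ℝ (Icc (0:ℝ) 1) h ∧
    (∀ u ∈ Icc (0:ℝ) 1, h u ≤ k u) ∧ y = h x}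

/-- The concave envelope on `[0,1]`: the smallest concave function above `k` on `[0,1]`. -/
def concaveEnvelope (k : ℝ → ℝ) : ℝ → ℝ := fun x =>
  sInf {y : ℝ | ∃ h : ℝ → ℝ, ConcaveOn ℝ (Icc (0:ℝ) 1) h ∧
    (∀ u ∈ Icc (0:ℝ) 1, k u ≤ h u) ∧ y = h x}

/-- The right derivative. -/
def rderiv (f : ℝ → ℝ) (x : ℝ) : ℝ := derivWithin f (Ici x) x

/-- Tail value-at-risk / expected shortfall at level `α`. -/
def TVaR (α : ℝ) (X : Ω → ℝ) : ℝ := (1 - α)⁻¹ * ∫ u in α..1, quantileRV X u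

/-- The probability space is rich enough to support a uniformly distributed random
variable (a consequence of atomlessness used throughout). -/
def Rich (Ω : Type*) [MeasureSpace Ω] : Prop :=
  ∃ U : Ω → ℝ, Measurable U ∧
    Measure.map U (volume : Measure Ω) = volume.restrict (Ioo (0:ℝ) 1)

end

/-
The quantile transform `X_b =ᵈ Q_b(U)`, `U` uniform on `(0, 1)`, reduces everything to the
piecewise-linear quantile `Q_b`: its moments give the mean and variance,
`Q_b(1 - u) - μ = μ - Q_b(u)` gives the symmetry, and inverting it shows that the cdf is a
clamped affine function on either side of `μ`, hence convex below and concave above.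
For `b ≤ max(α, 1 - α)` one gets `(1 - α)(TVaR_α(X_b) - μ)/σ = x(2t - x)/(2√(2t³/3))` with
`t = 1 - b`, `x = min(α, 1 - α)`. On `t ∈ [x, 1/2]` this is maximal at `t = 3x/2` if `x ≤ 1/3`
and at `t = 1/2` otherwise, which yields the three regimes.
-/

open ProbabilityTheory

section Quantile

variable {Ω : Type*} [MeasureSpace Ω] [IsProbabilityMeasure (volume : Measure Ω)] {X : Ω → ℝ}

lemma cdfRV_eq_cdf_map (hX : Measurable X) (t : ℝ) :
    cdfRV X t = cdf (volume.map X) t := by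
  have : IsProbabilityMeasure (volume.map X) := Measure.isProbabilityMeasure_map hX.aemeasurable
  rw [cdf_eq_real, measureReal_def, Measure.map_apply hX measurableSet_Iic]
  rfl

lemma cdfRV_mem_Icc (X : Ω → ℝ) (t : ℝ) : cdfRV X t ∈ Icc (0 : ℝ) 1 :=
  ⟨ENNReal.toReal_nonneg, ENNReal.toReal_le_of_le_ofReal zero_le_one (by simpa using prob_le_one)⟩

lemma quantileRV_le_iff (hX : Measurable X) {p t : ℝ} (hp : p ∈ Ioo (0 : ℝ) 1) :
    quantileRV X p ≤ t ↔ p ≤ cdfRV X t := by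
  have : IsProbabilityMeasure (volume.map X) := Measure.isProbabilityMeasure_map hX.aemeasurable
  simp only [quantileRV, cdfRV_eq_cdf_map hX]
  set F := cdf (volume.map X)
  have hne : {x | p ≤ F x}.Nonempty :=
    ((tendsto_cdf_atTop _).eventually (eventually_ge_nhds hp.2)).exists
  have hbdd : BddBelow {x | p ≤ F x} := by
    obtain ⟨x₀, hx₀⟩ := ((tendsto_cdf_atBot _).eventually (eventually_lt_nhds hp.1)).exists
    exact ⟨x₀, fun x hx => le_of_not_gt fun hlt => (hx.trans (F.mono hlt.le)).not_gt hx₀⟩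
  refine ⟨fun h => ?_, fun h => csInf_le hbdd h⟩
  refine le_trans ?_ (F.mono h)
  rw [← F.iInf_Ioi_eq]
  refine le_ciInf fun ⟨y, hy⟩ => ?_
  obtain ⟨x, hx, hxy⟩ := (csInf_lt_iff hbdd hne).mp hy
  exact hx.trans (F.mono hxy.le)

lemma eq_of_forall_Ioo_le_iff {a c : ℝ} (ha : a ∈ Icc (0 : ℝ) 1) (hc : c ∈ Icc (0 : ℝ) 1)
    (h : ∀ p ∈ Ioo (0 : ℝ) 1, p ≤ a ↔ p ≤ c) : a = c := by
  by_contra hne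
  rcases lt_or_gt_of_ne hne with hlt | hlt
  · have hmid : (a + c) / 2 ∈ Ioo (0 : ℝ) 1 := ⟨by linarith [ha.1], by linarith [hc.2]⟩
    linarith [(h _ hmid).mpr (by linarith)]
  · have hmid : (a + c) / 2 ∈ Ioo (0 : ℝ) 1 := ⟨by linarith [hc.1], by linarith [ha.2]⟩
    linarith [(h _ hmid).mp (by linarith)]

lemma cdfRV_eq_of_quantileRV_le_iff (hX : Measurable X) {t c : ℝ} (hc : c ∈ Icc (0 : ℝ) 1)
    (h : ∀ p ∈ Ioo (0 : ℝ) 1, quantileRV X p ≤ t ↔ p ≤ c) : cdfRV X t = c :=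
  eq_of_forall_Ioo_le_iff (cdfRV_mem_Icc X t) hc fun p hp =>
    (quantileRV_le_iff hX hp).symm.trans (h p hp)

lemma volume_restrict_Ioo_Iic {c : ℝ} (hc : c ∈ Icc (0 : ℝ) 1) :
    volume.restrict (Ioo (0 : ℝ) 1) (Iic c) = ENNReal.ofReal c := by
  rw [Measure.restrict_congr_set Ioo_ae_eq_Ioc, Measure.restrict_apply measurableSet_Iic,
    Iic_inter_Ioc_of_le hc.2, Real.volume_Ioc, sub_zero]

lemma map_eq_map_of_quantileRV_eq (hX : Measurable X) {Q : ℝ → ℝ} (hQ : Measurable Q)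
    (hq : ∀ u ∈ Ioo (0 : ℝ) 1, quantileRV X u = Q u) :
    volume.map X = (volume.restrict (Ioo (0 : ℝ) 1)).map Q := by
  have : IsProbabilityMeasure (volume.map X) := Measure.isProbabilityMeasure_map hX.aemeasurable
  refine Measure.ext_of_Iic _ _ fun t => ?_
  have hpre : Q ⁻¹' Iic t ∩ Ioo 0 1 = Iic (cdfRV X t) ∩ Ioo 0 1 := by
    ext u
    refine and_congr_left fun hu => ?_
    simp only [mem_preimage, mem_Iic]
    rw [← hq u hu, quantileRV_le_iff hX hu]
  rw [Measure.map_apply hX measurableSet_Iic, Measure.map_apply hQ measurableSet_Iic,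
    Measure.restrict_apply (hQ measurableSet_Iic), hpre,
    ← Measure.restrict_apply measurableSet_Iic, volume_restrict_Ioo_Iic (cdfRV_mem_Icc X t),
    cdfRV, ENNReal.ofReal_toReal (measure_ne_top _ _)]
  rfl

lemma integrable_comp_of_quantileRV_eq (hX : Measurable X) {Q : ℝ → ℝ} (hQ : Continuous Q)
    (hq : ∀ u ∈ Ioo (0 : ℝ) 1, quantileRV X u = Q u) {φ : ℝ → ℝ} (hφ : Continuous φ) :
    Integrable (fun ω => φ (X ω)) := by
  refine (integrable_map_measure hφ.aestronglyMeasurable hX.aemeasurable).mp ?_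
  rw [map_eq_map_of_quantileRV_eq hX hQ.measurable hq,
    integrable_map_measure hφ.aestronglyMeasurable hQ.measurable.aemeasurable]
  exact (hφ.comp hQ).integrableOn_Icc.mono_set Ioo_subset_Icc_self

lemma integral_comp_of_quantileRV_eq (hX : Measurable X) {Q : ℝ → ℝ} (hQ : Measurable Q)
    (hq : ∀ u ∈ Ioo (0 : ℝ) 1, quantileRV X u = Q u) {φ : ℝ → ℝ} (hφ : Continuous φ) :
    ∫ ω, φ (X ω) = ∫ u in (0 : ℝ)..1, φ (Q u) := by
  rw [← integral_map hX.aemeasurable hφ.aestronglyMeasurable, map_eq_map_of_quantileRV_eq hX hQ hq,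
    integral_map hQ.aemeasurable hφ.aestronglyMeasurable,
    intervalIntegral.integral_of_le zero_le_one, integral_Ioc_eq_integral_Ioo]

lemma map_one_sub_volume_restrict_Ioo :
    (volume.restrict (Ioo (0 : ℝ) 1)).map (fun u => 1 - u) = volume.restrict (Ioo (0 : ℝ) 1) := by
  have h := (Measure.measurePreserving_sub_left volume (1 : ℝ)).restrict_preimage
    (measurableSet_Ioo (a := (0 : ℝ)) (b := 1))
  have hpre : (fun u : ℝ => 1 - u) ⁻¹' Ioo 0 1 = Ioo 0 1 := by
    ext u
    simp only [mem_preimage, mem_Ioo]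
    constructor <;> rintro ⟨h₁, h₂⟩ <;> constructor <;> linarith
  rw [hpre] at h
  exact h.map_eq

lemma symmAbout_of_quantileRV_eq (hX : Measurable X) {Q : ℝ → ℝ} (hQ : Measurable Q)
    (hq : ∀ u ∈ Ioo (0 : ℝ) 1, quantileRV X u = Q u) {c : ℝ}
    (hQc : ∀ u, Q (1 - u) - c = c - Q u) : SymmAbout X c := by
  have hlaw : ∀ g : ℝ → ℝ, Measurable g →
      volume.map (g ∘ X) = (volume.restrict (Ioo (0 : ℝ) 1)).map (g ∘ Q) := fun g hg => by
    rw [← Measure.map_map hg hX, map_eq_map_of_quantileRV_eq hX hQ hq, Measure.map_map hg hQ]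
  calc volume.map (fun ω => X ω - c)
      = (volume.restrict (Ioo 0 1)).map ((fun x => x - c) ∘ Q) := hlaw (· - c) (by fun_prop)
    _ = ((volume.restrict (Ioo 0 1)).map (fun u => 1 - u)).map ((fun x => c - x) ∘ Q) := by
        rw [Measure.map_map ((by fun_prop : Measurable fun x : ℝ => c - x).comp hQ) (by fun_prop)]
        congr 1
        funext u
        simp only [Function.comp_apply]
        linarith [hQc u]
    _ = volume.map (fun ω => c - X ω) := by
        rw [map_one_sub_volume_restrict_Ioo, ← hlaw _ (by fun_prop)]
        rfl

end Quantile

lemma TVaR_eq_of_quantileRV_eq {Ω : Type*} [MeasureSpace Ω] {X : Ω → ℝ} {Q : ℝ → ℝ}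
    (hq : ∀ u ∈ Ioo (0 : ℝ) 1, quantileRV X u = Q u) {α : ℝ} (hα : α ∈ Icc (0 : ℝ) 1) :
    TVaR α X = (1 - α)⁻¹ * ∫ u in α..1, Q u := by
  rw [TVaR, intervalIntegral.integral_congr_ae]
  filter_upwards [Measure.ae_ne volume (1 : ℝ)] with u hu1 hu
  rw [uIoc_of_le hα.2] at hu
  exact hq u ⟨hα.1.trans_lt hu.1, lt_of_le_of_ne hu.2 hu1⟩

def plateauQuantile (μ s b u : ℝ) : ℝ := μ + s * (min (u - (1 - b)) 0 + max (u - b) 0)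

lemma integral_const_add_mul_sub (c d r a e : ℝ) :
    ∫ u in a..e, (c + d * (u - r)) = c * (e - a) + d * ((e - r) ^ 2 - (a - r) ^ 2) / 2 := by
  rw [intervalIntegral.integral_add intervalIntegrable_const
    (Continuous.intervalIntegrable (by fun_prop) _ _)]
  simp only [intervalIntegral.integral_const, smul_eq_mul, intervalIntegral.integral_const_mul,
    intervalIntegral.integral_comp_sub_right (fun u => u), integral_id]
  ring

lemma integral_mul_sub_sq (d r a e : ℝ) :
    ∫ u in a..e, (d * (u - r)) ^ 2 = d ^ 2 * ((e - r) ^ 3 - (a - r) ^ 3) / 3 := by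
  simp only [mul_pow, intervalIntegral.integral_const_mul,
    intervalIntegral.integral_comp_sub_right (fun u => u ^ 2), integral_pow, Nat.reduceAdd,
    Nat.cast_ofNat]
  ring

section Plateau

variable {μ s b : ℝ}

lemma plateauQuantile_eq_ite {σ K : ℝ} (hb : 1 - b ≤ b) (u : ℝ) :
    plateauQuantile μ (σ / K) b u =
      if u < 1 - b then μ + σ * (u - 1 + b) / K
      else if u ≤ b then μ
      else μ + σ * (u - b) / K := by
  rw [plateauQuantile]
  split_ifs with h₁ h₂
  · rw [min_eq_left (by linarith), max_eq_right (by linarith)]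
    ring
  · rw [min_eq_right (by linarith), max_eq_right (by linarith)]
    ring
  · rw [min_eq_right (by linarith), max_eq_left (by linarith)]
    ring

lemma continuous_plateauQuantile : Continuous (plateauQuantile μ s b) := by
  unfold plateauQuantile
  fun_prop

lemma plateauQuantile_one_sub (u : ℝ) :
    plateauQuantile μ s b (1 - u) - μ = μ - plateauQuantile μ s b u := by
  have h₁ : min (1 - u - (1 - b)) 0 = -max (u - b) 0 := by simpa using min_neg_neg (u - b) 0
  have h₂ : max (1 - u - b) 0 = -min (u - (1 - b)) 0 := by
    simpa [sub_right_comm] using max_neg_neg (u - (1 - b)) 0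
  rw [plateauQuantile, plateauQuantile, h₁, h₂]
  ring

lemma plateauQuantile_le_iff_of_lt (hs : 0 < s) (hb : 1 - b ≤ b) {t : ℝ} (ht : t < μ) (p : ℝ) :
    plateauQuantile μ s b p ≤ t ↔ p ≤ 1 - b + (t - μ) / s := by
  have hr : (t - μ) / s < 0 := div_neg_of_neg_of_pos (by linarith) hs
  rw [plateauQuantile, ← le_sub_iff_add_le', ← le_div_iff₀' hs]
  rcases le_or_gt p (1 - b) with hp | hp
  · rw [min_eq_left (by linarith), max_eq_right (by linarith)]
    constructor <;> intro h <;> linarith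
  · rw [min_eq_right (by linarith)]
    constructor <;> intro h <;> linarith [le_max_right (p - b) 0]

lemma plateauQuantile_le_iff_of_le (hs : 0 < s) (hb : 1 - b ≤ b) {t : ℝ} (ht : μ ≤ t) (p : ℝ) :
    plateauQuantile μ s b p ≤ t ↔ p ≤ b + (t - μ) / s := by
  have hr : 0 ≤ (t - μ) / s := div_nonneg (by linarith) hs.le
  rw [plateauQuantile, ← le_sub_iff_add_le', ← le_div_iff₀' hs]
  rcases le_or_gt p b with hp | hp
  · rw [max_eq_right (by linarith)]
    constructor <;> intro h <;> linarith [min_le_right (p - (1 - b)) 0]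
  · rw [min_eq_right (by linarith), max_eq_left (by linarith)]
    constructor <;> intro h <;> linarith

lemma integral_comp_plateauQuantile (hb : 1 - b ≤ b) (hb1 : b ≤ 1) {φ : ℝ → ℝ}
    (hφ : Continuous φ) {a : ℝ} (ha : a ≤ 1 - b) :
    ∫ u in a..1, φ (plateauQuantile μ s b u) =
      (∫ u in a..(1 - b), φ (μ + s * (u - (1 - b)))) + (b - (1 - b)) * φ μ +
        ∫ u in b..1, φ (μ + s * (u - b)) := by
  have hint : ∀ x y, IntervalIntegrable (fun u => φ (plateauQuantile μ s b u)) volume x y :=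
    fun x y => (hφ.comp continuous_plateauQuantile).intervalIntegrable x y
  rw [← intervalIntegral.integral_add_adjacent_intervals (hint a (1 - b)) (hint _ 1),
    ← intervalIntegral.integral_add_adjacent_intervals (hint _ b) (hint b 1), ← add_assoc]
  congr 1
  · congr 1
    · refine intervalIntegral.integral_congr fun u hu => ?_
      rw [uIcc_of_le ha] at hu
      rw [plateauQuantile, min_eq_left (by linarith [hu.2]), max_eq_right (by linarith [hu.2]),
        add_zero]
    · rw [intervalIntegral.integral_congr (g := fun _ => φ μ) fun u hu => ?_,
        intervalIntegral.integral_const, smul_eq_mul]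
      rw [uIcc_of_le hb] at hu
      rw [plateauQuantile, min_eq_right (by linarith [hu.1]), max_eq_right (by linarith [hu.2]),
        add_zero, mul_zero, add_zero]
  · refine intervalIntegral.integral_congr fun u hu => ?_
    rw [uIcc_of_le hb1] at hu
    rw [plateauQuantile, min_eq_right (by linarith [hu.1]), max_eq_left (by linarith [hu.1]),
      zero_add]

lemma integral_plateauQuantile_of_le_one_sub (hb : 1 - b ≤ b) (hb1 : b ≤ 1) {α : ℝ}
    (hα : α ≤ 1 - b) :
    ∫ u in α..1, plateauQuantile μ s b u = μ * (1 - α) + s * (α * (2 * (1 - b) - α)) / 2 := by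
  have h := integral_comp_plateauQuantile (μ := μ) (s := s) hb hb1 continuous_id hα
  simp only [id] at h
  rw [h, integral_const_add_mul_sub, integral_const_add_mul_sub]
  ring

lemma integral_plateauQuantile_of_le (hb : 1 - b ≤ b) {α : ℝ} (hα : b ≤ α) (hα1 : α ≤ 1) :
    ∫ u in α..1, plateauQuantile μ s b u =
      μ * (1 - α) + s * ((1 - α) * (2 * (1 - b) - (1 - α))) / 2 := by
  rw [intervalIntegral.integral_congr (g := fun u => μ + s * (u - b)) fun u hu => ?_,
    integral_const_add_mul_sub]
  · ring
  rw [uIcc_of_le hα1] at hu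
  simp only [plateauQuantile]
  rw [min_eq_right (by linarith [hu.1]), max_eq_left (by linarith [hu.1]), zero_add]

lemma integral_plateauQuantile_sub_sq (hb : 1 - b ≤ b) (hb1 : b ≤ 1) :
    ∫ u in (0 : ℝ)..1, (plateauQuantile μ s b u - μ) ^ 2 = s ^ 2 * (2 / 3 * (1 - b) ^ 3) := by
  rw [integral_comp_plateauQuantile (φ := fun x => (x - μ) ^ 2) hb hb1 (by fun_prop)
    (by linarith)]
  simp only [add_sub_cancel_left, sub_self, integral_mul_sub_sq]
  ring

end Plateau

section PlateauLaw

variable {Ω : Type*} [MeasureSpace Ω] [IsProbabilityMeasure (volume : Measure Ω)] {X : Ω → ℝ}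
  {μ s b : ℝ}

lemma cdfRV_eq_of_lt_of_quantileRV_eq_plateauQuantile (hX : Measurable X) (hs : 0 < s)
    (hb : 1 - b ≤ b) (hq : ∀ u ∈ Ioo (0 : ℝ) 1, quantileRV X u = plateauQuantile μ s b u)
    {t : ℝ} (ht : t < μ) : cdfRV X t = max 0 (1 - b + (t - μ) / s) := by
  have hr : (t - μ) / s < 0 := div_neg_of_neg_of_pos (by linarith) hs
  refine cdfRV_eq_of_quantileRV_le_iff hX ⟨le_max_left _ _, max_le zero_le_one (by linarith)⟩
    fun p hp => ?_
  rw [hq p hp, plateauQuantile_le_iff_of_lt hs hb ht, le_max_iff, or_iff_right hp.1.not_ge]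

lemma cdfRV_eq_of_le_of_quantileRV_eq_plateauQuantile (hX : Measurable X) (hs : 0 < s)
    (hb : 1 - b ≤ b) (hq : ∀ u ∈ Ioo (0 : ℝ) 1, quantileRV X u = plateauQuantile μ s b u)
    {t : ℝ} (ht : μ ≤ t) : cdfRV X t = min 1 (b + (t - μ) / s) := by
  have hr : 0 ≤ (t - μ) / s := div_nonneg (by linarith) hs.le
  refine cdfRV_eq_of_quantileRV_le_iff hX ⟨le_min zero_le_one (by linarith), min_le_left _ _⟩
    fun p hp => ?_
  rw [hq p hp, plateauQuantile_le_iff_of_le hs hb ht, le_min_iff, and_iff_right hp.2.le]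

lemma unimodal_of_quantileRV_eq_plateauQuantile (hX : Measurable X) (hs : 0 < s)
    (hb : 1 - b ≤ b) (hq : ∀ u ∈ Ioo (0 : ℝ) 1, quantileRV X u = plateauQuantile μ s b u) :
    Unimodal X := by
  have hs' : 0 ≤ s⁻¹ := inv_nonneg.2 hs.le
  refine ⟨μ, ?_, ?_⟩
  · refine ((convexOn_const 0 (convex_Iio μ)).sup
      (((convexOn_id (convex_Iio μ)).smul hs').add_const (1 - b - μ / s))).congr fun t ht => ?_
    rw [cdfRV_eq_of_lt_of_quantileRV_eq_plateauQuantile hX hs hb hq ht]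
    change max 0 (s⁻¹ * t + (1 - b - μ / s)) = _
    ring_nf
  · refine ((concaveOn_const 1 (convex_Ioi μ)).inf
      (((concaveOn_id (convex_Ioi μ)).smul hs').add_const (b - μ / s))).congr fun t ht => ?_
    rw [cdfRV_eq_of_le_of_quantileRV_eq_plateauQuantile hX hs hb hq (le_of_lt ht)]
    change min 1 (s⁻¹ * t + (b - μ / s)) = _
    ring_nf

lemma mem_VSU_of_quantileRV_eq_plateauQuantile {σ : ℝ} (hX : Measurable X) (hs : 0 < s)
    (hb : 1 - b ≤ b) (hb1 : b ≤ 1) (hsσ : s ^ 2 * (2 / 3 * (1 - b) ^ 3) = σ ^ 2)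
    (hq : ∀ u ∈ Ioo (0 : ℝ) 1, quantileRV X u = plateauQuantile μ s b u) :
    X ∈ (VSU μ σ : Set (Ω → ℝ)) := by
  have hQ : Continuous (plateauQuantile μ s b) := continuous_plateauQuantile
  have hmean : ∫ ω, X ω = μ := by
    refine (integral_comp_of_quantileRV_eq hX hQ.measurable hq continuous_id).trans ?_
    simp only [id_eq]
    rw [integral_plateauQuantile_of_le_one_sub hb hb1 (by linarith)]
    ring
  have hvar : ∫ ω, (X ω - μ) ^ 2 = σ ^ 2 := by
    rw [integral_comp_of_quantileRV_eq hX hQ.measurable hq (φ := fun x => (x - μ) ^ 2)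
      (by fun_prop), integral_plateauQuantile_sub_sq hb hb1, hsσ]
  exact ⟨⟨hX, integrable_comp_of_quantileRV_eq hX hQ hq continuous_id, hmean,
    integrable_comp_of_quantileRV_eq hX hQ hq (φ := fun x => (x - μ) ^ 2) (by fun_prop), hvar⟩,
    symmAbout_of_quantileRV_eq hX hQ.measurable hq plateauQuantile_one_sub,
    unimodal_of_quantileRV_eq_plateauQuantile hX hs hb hq⟩

end PlateauLaw

lemma TVaR_eq_of_quantileRV_eq_plateauQuantile {Ω : Type*} [MeasureSpace Ω] {X : Ω → ℝ}
    {μ s b α : ℝ} (hb : 1 - b ≤ b) (hb1 : b ≤ 1) (hα : α ∈ Ioo (0 : ℝ) 1)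
    (hαb : min α (1 - α) ≤ 1 - b)
    (hq : ∀ u ∈ Ioo (0 : ℝ) 1, quantileRV X u = plateauQuantile μ s b u) :
    TVaR α X = μ + s * (min α (1 - α) * (2 * (1 - b) - min α (1 - α))) / (2 * (1 - α)) := by
  have hα1 : 1 - α ≠ 0 := by linarith [hα.2]
  rw [TVaR_eq_of_quantileRV_eq hq ⟨hα.1.le, hα.2.le⟩]
  rcases le_total α (1 - α) with h | h
  · rw [min_eq_left h] at hαb ⊢
    rw [integral_plateauQuantile_of_le_one_sub hb hb1 hαb]
    field_simp
  · rw [min_eq_right h] at hαb ⊢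
    rw [integral_plateauQuantile_of_le hb (by linarith) hα.2.le]
    field_simp

/-- `(1 - α) (TVaR_α - μ) / σ` for the plateau quantile, with `t = 1 - b` and
`x = min α (1 - α)`. -/
noncomputable def tailGain (x t : ℝ) : ℝ := x * (2 * t - x) / (2 * √(2 / 3 * t ^ 3))

section TailGain

variable {x t : ℝ}

lemma tailGain_le_two_mul_sqrt_div_three (hx : 0 ≤ x) (ht : 0 < t) (hxt : x ≤ 2 * t) :
    tailGain x t ≤ 2 * √x / 3 := by
  rw [tailGain, div_le_iff₀ (by positivity)]
  refine (pow_le_pow_iff_left₀ (by nlinarith) (by positivity) two_ne_zero).1 ?_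
  simp only [mul_pow, div_pow, Real.sq_sqrt hx, Real.sq_sqrt (by positivity : 0 ≤ 2 / 3 * t ^ 3)]
  -- `32 t³ - 27 x (2t - x)² = 3 (x - 2t/3)² (24 t - 9 x)`
  nlinarith [mul_nonneg hx
    (mul_nonneg (sq_nonneg (x - 2 / 3 * t)) (by linarith : 0 ≤ 24 * t - 9 * x))]

lemma tailGain_three_halves_mul (hx : 0 < x) : tailGain x (3 / 2 * x) = 2 * √x / 3 := by
  have hsx : √x ^ 2 = x := Real.sq_sqrt hx.le
  have hK : √(2 / 3 * (3 / 2 * x) ^ 3) = 3 / 2 * x * √x := by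
    rw [← Real.sqrt_sq (by positivity : 0 ≤ 3 / 2 * x * √x)]
    congr 1
    linear_combination (-9 / 4 * x ^ 2) * hsx
  have : 0 < √x := Real.sqrt_pos.2 hx
  rw [tailGain, hK]
  field_simp
  linear_combination (-2) * hsx

lemma sq_two_mul_sub_le (h3 : 1 / 3 ≤ x) (hxt : x ≤ t) (ht : t ≤ 1 / 2) :
    (2 * t - x) ^ 2 ≤ 8 * (1 - x) ^ 2 * t ^ 3 := by
  have hx2 : x ≤ 1 / 2 := hxt.trans ht
  have hq1 : 0 ≤ 6 * x - 4 * x ^ 2 - 1 := by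
    nlinarith [mul_nonneg (sub_nonneg.2 h3) (sub_nonneg.2 hx2)]
  -- `8 (1 - x)² t³ - (2t - x)² = (1 - 2t) (-q t)` for this quadratic `q`
  have hq : 4 * (1 - x) ^ 2 * t ^ 2 - 2 * x * (2 - x) * t + x ^ 2 ≤ 0 := by
    rcases hx2.eq_or_lt with rfl | hlt
    · rw [le_antisymm ht hxt]
      norm_num
    · nlinarith [mul_nonneg (mul_nonneg (show (0 : ℝ) ≤ 1 / 2 - t by linarith) (sq_nonneg x)) hq1,
        mul_nonneg (mul_nonneg (sub_nonneg.2 hxt) (show (0 : ℝ) ≤ 3 * x - 1 by linarith))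
          (show (0 : ℝ) ≤ 1 - x by linarith),
        mul_nonneg (mul_nonneg (mul_nonneg (sub_nonneg.2 hxt)
          (show (0 : ℝ) ≤ 1 / 2 - t by linarith)) (sq_nonneg (1 - x)))
          (show (0 : ℝ) ≤ 1 / 2 - x by linarith)]
  nlinarith [mul_nonneg (show (0 : ℝ) ≤ 1 - 2 * t by linarith) (neg_nonneg.2 hq)]

lemma tailGain_le_sqrt_three_mul (h3 : 1 / 3 ≤ x) (hxt : x ≤ t) (ht : t ≤ 1 / 2) :
    tailGain x t ≤ √3 * x * (1 - x) := by
  have hx0 : 0 < x := by linarith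
  have hx1 : x < 1 := by linarith
  have ht0 : 0 < t := by linarith
  rw [tailGain, div_le_iff₀ (by positivity)]
  refine (pow_le_pow_iff_left₀ (by nlinarith) (by positivity) two_ne_zero).1 ?_
  simp only [mul_pow, Real.sq_sqrt (by norm_num : (0 : ℝ) ≤ 3),
    Real.sq_sqrt (by positivity : 0 ≤ 2 / 3 * t ^ 3)]
  nlinarith [mul_le_mul_of_nonneg_left (sq_two_mul_sub_le h3 hxt ht) (sq_nonneg x)]

lemma tailGain_one_half (x : ℝ) : tailGain x (1 / 2) = √3 * x * (1 - x) := by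
  have h3 : √3 ^ 2 = 3 := Real.sq_sqrt (by norm_num)
  have hK : √(2 / 3 * (1 / 2 : ℝ) ^ 3) = 1 / (2 * √3) := by
    rw [← Real.sqrt_sq (by positivity : (0 : ℝ) ≤ 1 / (2 * √3))]
    congr 1
    rw [div_pow 1 (2 * √3), mul_pow, h3]
    norm_num
  have : 0 < √3 := by positivity
  rw [tailGain, hK]
  field_simp

lemma isGreatest_tailGain_of_le_one_third (hx : 0 < x) (h3 : x ≤ 1 / 3) :
    IsGreatest (tailGain x '' Icc x (1 / 2)) (2 * √x / 3) :=
  ⟨⟨3 / 2 * x, ⟨by linarith, by linarith⟩, tailGain_three_halves_mul hx⟩,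
    forall_mem_image.2 fun _ ht =>
      tailGain_le_two_mul_sqrt_div_three hx.le (hx.trans_le ht.1) (by linarith [ht.1])⟩

lemma isGreatest_tailGain_of_one_third_le (h3 : 1 / 3 ≤ x) (hx : x ≤ 1 / 2) :
    IsGreatest (tailGain x '' Icc x (1 / 2)) (√3 * x * (1 - x)) :=
  ⟨⟨1 / 2, ⟨hx, le_rfl⟩, tailGain_one_half x⟩,
    forall_mem_image.2 fun _ ht => tailGain_le_sqrt_three_mul h3 ht.1 ht.2⟩

end TailGain

lemma sSup_TVaR_plateauQuantile {Ω : Type*} [MeasureSpace Ω] {μ σ α : ℝ} (hσ : 0 ≤ σ)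
    (hα : α ∈ Ioo (0 : ℝ) 1) {X : ℝ → Ω → ℝ}
    (hq : ∀ b ∈ Ico (1 / 2 : ℝ) 1, ∀ u ∈ Ioo (0 : ℝ) 1,
      quantileRV (X b) u = plateauQuantile μ (σ / √(2 / 3 * (1 - b) ^ 3)) b u)
    {m : ℝ} (hm : IsGreatest (tailGain (min α (1 - α)) '' Icc (min α (1 - α)) (1 / 2)) m) :
    sSup ((fun b => TVaR α (X b)) '' Icc (1 / 2 : ℝ) (max α (1 - α))) = μ + σ / (1 - α) * m := by
  have hx : min α (1 - α) = 1 - max α (1 - α) := by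
    rw [← min_sub_sub_left, sub_sub_cancel, min_comm]
  have hmax : max α (1 - α) < 1 := max_lt hα.2 (by linarith [hα.1])
  have hα1 : 1 - α ≠ 0 := by linarith [hα.2]
  have himage : (fun b => TVaR α (X b)) '' Icc (1 / 2 : ℝ) (max α (1 - α)) =
      (fun y => μ + σ / (1 - α) * y) ''
        (tailGain (min α (1 - α)) '' Icc (min α (1 - α)) (1 / 2)) := by
    have hIcc : (fun b => 1 - b) '' Icc (1 / 2 : ℝ) (max α (1 - α)) =
        Icc (min α (1 - α)) (1 / 2) := by
      rw [image_const_sub_Icc, hx]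
      norm_num
    rw [← hIcc, image_image, image_image]
    refine image_congr fun b hb => ?_
    rw [TVaR_eq_of_quantileRV_eq_plateauQuantile (by linarith [hb.1]) (by linarith [hb.2]) hα
      (by linarith [hb.2]) (hq b ⟨hb.1, hb.2.trans_lt hmax⟩), tailGain]
    field_simp
  rw [himage]
  exact (((monotone_id.const_mul (div_nonneg hσ (by linarith [hα.2]))).const_add μ).map_isGreatest
    hm).csSup_eq

/-- Eq. (xx1): TVaR maximization over the explicit family `S(α) ∩ V(μ,σ)` of symmetric
unimodal random variables with piecewise-linear quantile functions. -/
theorem stmt_15 {Ω : Type*} [MeasureSpace Ω] [IsProbabilityMeasure (volume : Measure Ω)]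
    (μ σ α : ℝ) (hσ : 0 < σ) (hα : α ∈ Ioo (0:ℝ) 1)
    (X : ℝ → Ω → ℝ)
    (hXmeas : ∀ b ∈ Ico (1/2:ℝ) 1, Measurable (X b))
    (hXq : ∀ b ∈ Ico (1/2:ℝ) 1, ∀ u ∈ Ioo (0:ℝ) 1,
      quantileRV (X b) u =
        if u < 1 - b then μ + σ * (u - 1 + b) / Real.sqrt ((2/3) * (1 - b)^3)
        else if u ≤ b then μ
        else μ + σ * (u - b) / Real.sqrt ((2/3) * (1 - b)^3)) :
    (∀ b ∈ Ico (1/2:ℝ) 1, X b ∈ (VSU μ σ : Set (Ω → ℝ))) ∧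
    (α < 1/3 →
      sSup ((fun b => TVaR α (X b)) '' Icc (1/2:ℝ) (max α (1 - α))) =
        μ + 2 * σ * Real.sqrt α / (3 * (1 - α))) ∧
    (1/3 ≤ α → α < 2/3 →
      sSup ((fun b => TVaR α (X b)) '' Icc (1/2:ℝ) (max α (1 - α))) =
        μ + Real.sqrt 3 * σ * α) ∧
    (2/3 ≤ α →
      sSup ((fun b => TVaR α (X b)) '' Icc (1/2:ℝ) (max α (1 - α))) =
        μ + 2 * σ / (3 * Real.sqrt (1 - α))) := by
  have hK : ∀ b : ℝ, b < 1 → 0 < 2 / 3 * (1 - b) ^ 3 := fun b hb => by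
    have : 0 < 1 - b := by linarith
    positivity
  have hq : ∀ b ∈ Ico (1 / 2 : ℝ) 1, ∀ u ∈ Ioo (0 : ℝ) 1,
      quantileRV (X b) u = plateauQuantile μ (σ / √(2 / 3 * (1 - b) ^ 3)) b u :=
    fun b hb u hu => by rw [hXq b hb u hu, plateauQuantile_eq_ite (by linarith [hb.1])]
  refine ⟨fun b hb => ?_, fun h => ?_, fun h₁ h₂ => ?_, fun h => ?_⟩
  · refine mem_VSU_of_quantileRV_eq_plateauQuantile (hXmeas b hb)
      (div_pos hσ (Real.sqrt_pos.2 (hK b hb.2))) (by linarith [hb.1]) hb.2.le ?_ (hq b hb)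
    rw [div_pow, Real.sq_sqrt (hK b hb.2).le, div_mul_cancel₀ _ (hK b hb.2).ne']
  · rw [sSup_TVaR_plateauQuantile hσ.le hα hq (by
      rw [min_eq_left (by linarith)]
      exact isGreatest_tailGain_of_le_one_third hα.1 h.le)]
    field_simp
  · rw [sSup_TVaR_plateauQuantile hσ.le hα hq (isGreatest_tailGain_of_one_third_le
      (le_min (by linarith) (by linarith))
      (by linarith [min_le_left α (1 - α), min_le_right α (1 - α)]))]
    have hx : min α (1 - α) * (1 - min α (1 - α)) = α * (1 - α) := by
      rcases min_choice α (1 - α) with h | h <;> rw [h]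
      ring
    have hα1 : 1 - α ≠ 0 := by linarith [hα.2]
    rw [mul_assoc √3, hx]
    field_simp
  · rw [sSup_TVaR_plateauQuantile hσ.le hα hq (by
      rw [min_eq_right (by linarith)]
      exact isGreatest_tailGain_of_le_one_third (by linarith [hα.2]) (by linarith))]
    have hα1 : 0 < 1 - α := by linarith [hα.2]
    have : 0 < √(1 - α) := Real.sqrt_pos.2 hα1
    field_simp
    linear_combination (2 * σ) * Real.sq_sqrt hα1.le
end
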